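/- In characteristic 2, the universal acting Hopf algebra C_{k[C₂],k[C₂]} = (k[x]/(x²−1))* contains the primitive element x* (dual to x), i.e., δ(x*) = 1̂ ⊗ x* + x* ⊗ 1̂ where 1̂ = 1* + x* is the unit grouplike; consequently a ↦ ψ(x* ⊗ a) is a nonzero derivation of the Frobenius algebra k[C₂] that is not induced by any algebra automorphism. -/

import Mathlib

/-! On `k[C₂]` the operator `ψ(x* ⊗ -)` multiplies the coefficient of `g` by the parity of `g`,
viewed in `k`. In characteristic 2 the parity `C₂ → k` is additive, and multiplying coefficients
by an additive function of the group element satisfies the Leibniz rule. A map satisfying the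
Leibniz rule kills `1`, so it is not an algebra automorphism. Primitivity of `x*` is the defining
formula `δ(x*) = x* ⊗ 1* + 1* ⊗ x*` together with `2 (x* ⊗ x*) = 0`. -/

open TensorProduct

section Char2

variable {k : Type*} [Field k]

/-- The cyclic group of order 2. -/
abbrev C2 : Type := Multiplicative (ZMod 2)

/-- The generator of `C2`. -/
def gC2 : C2 := Multiplicative.ofAdd (1 : ZMod 2)

/-- The dual of the universal coacting Hopf algebra `k[x]/(x²−1)` of `k[C₂]`, modelled as
`k × k` with basis `1* = (1,0)` and `x* = (0,1)`. -/
abbrev DualC : Type _ := k × k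

/-- The basis element `1*`. -/
def oneStar : DualC (k := k) := ((1 : k), (0 : k))
/-- The basis element `x*`. -/
def xStar : DualC (k := k) := ((0 : k), (1 : k))

/-- The comultiplication on the dual Hopf algebra:
`δ(1*) = 1* ⊗ 1* + x* ⊗ x*`, `δ(x*) = x* ⊗ 1* + 1* ⊗ x*`. -/
noncomputable def deltaDual :
    DualC (k := k) →ₗ[k] DualC (k := k) ⊗[k] DualC (k := k) :=
  (LinearMap.toSpanSingleton k (DualC (k := k) ⊗[k] DualC (k := k))
      (oneStar ⊗ₜ[k] oneStar + xStar ⊗ₜ[k] xStar)) ∘ₗ LinearMap.fst k k k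
  + (LinearMap.toSpanSingleton k (DualC (k := k) ⊗[k] DualC (k := k))
      (xStar ⊗ₜ[k] oneStar + oneStar ⊗ₜ[k] xStar)) ∘ₗ LinearMap.snd k k k

/-- The universal action `ψ : C ⊗ k[C₂] → k[C₂]`:
`ψ(1* ⊗ e) = e`, `ψ(x* ⊗ g) = g`, and `0` on the other basis tensors. -/
noncomputable def psiAct :
    DualC (k := k) →ₗ[k] MonoidAlgebra k C2 →ₗ[k] MonoidAlgebra k C2 :=
  (LinearMap.toSpanSingleton k (MonoidAlgebra k C2 →ₗ[k] MonoidAlgebra k C2)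
      ((MonoidAlgebra.lsingle (1 : C2)) ∘ₗ ((Finsupp.lapply (1 : C2)) ∘ₗ (MonoidAlgebra.coeffLinearEquiv k).toLinearMap))) ∘ₗ LinearMap.fst k k k
  + (LinearMap.toSpanSingleton k (MonoidAlgebra k C2 →ₗ[k] MonoidAlgebra k C2)
      ((MonoidAlgebra.lsingle gC2) ∘ₗ ((Finsupp.lapply gC2) ∘ₗ (MonoidAlgebra.coeffLinearEquiv k).toLinearMap))) ∘ₗ LinearMap.snd k k k

theorem MonoidAlgebra.map_mul_of_map_single {R G : Type*} [CommSemiring R] [Monoid G]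
    (D : MonoidAlgebra R G →ₗ[R] MonoidAlgebra R G) (φ : G → R)
    (hφ : ∀ g h, φ (g * h) = φ g + φ h)
    (hD : ∀ g r, D (MonoidAlgebra.single g r) = MonoidAlgebra.single g (φ g * r))
    (a b : MonoidAlgebra R G) : D (a * b) = D a * b + a * D b := by
  induction a using MonoidAlgebra.induction_linear with
  | zero => simp
  | add a a' ha ha' => simp only [add_mul, map_add, ha, ha']; abel
  | single g r =>
    induction b using MonoidAlgebra.induction_linear with
    | zero => simp
    | add b b' hb hb' => simp only [mul_add, map_add, hb, hb']; abel
    | single h s =>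
      simp only [MonoidAlgebra.single_mul_single, hD, hφ, ← MonoidAlgebra.single_add]
      congr 1
      ring

theorem map_one_eq_zero_of_leibniz {A : Type*} [NonAssocRing A] (D : A → A)
    (hD : ∀ a b, D (a * b) = D a * b + a * D b) : D 1 = 0 := by
  simpa using hD 1 1

theorem C2.eq_one_or_eq_gC2 (g : C2) : g = 1 ∨ g = gC2 := by
  revert g; decide

theorem deltaDual_xStar :
    deltaDual (xStar (k := k)) = xStar ⊗ₜ[k] oneStar + oneStar ⊗ₜ[k] xStar := by
  simp [deltaDual, xStar]

theorem psiAct_xStar_single (g : C2) (c : k) :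
    psiAct (xStar (k := k)) (MonoidAlgebra.single g c)
      = MonoidAlgebra.single g ((Multiplicative.toAdd g).cast * c) := by
  rcases C2.eq_one_or_eq_gC2 g with rfl | rfl
  · simp [psiAct, xStar, gC2]
  · have hcast : ((1 : ZMod 2).cast : k) = 1 := by rw [ZMod.cast_eq_val]; simp [ZMod.val_one]
    simp [psiAct, xStar, gC2, hcast]

/-- In characteristic 2, `x*` is a primitive element of the universal acting Hopf algebra
of `k[C₂]`: `δ(x*) = 1̂ ⊗ x* + x* ⊗ 1̂` where `1̂ = 1* + x*` is the unit grouplike.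
Consequently `a ↦ ψ(x* ⊗ a)` is a nonzero derivation of the Frobenius algebra `k[C₂]`
which is not induced by any algebra automorphism. -/
theorem char2_primitive_derivation [CharP k 2] :
    (deltaDual (xStar (k := k))
      = (oneStar + xStar) ⊗ₜ[k] xStar + xStar ⊗ₜ[k] (oneStar + xStar)) ∧
    (psiAct (xStar (k := k)) ≠ 0) ∧
    (∀ a b : MonoidAlgebra k C2,
      psiAct (xStar (k := k)) (a * b)
        = psiAct (xStar (k := k)) a * b + a * psiAct (xStar (k := k)) b) ∧
    (∀ f : MonoidAlgebra k C2 ≃ₐ[k] MonoidAlgebra k C2,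
      ⇑(psiAct (xStar (k := k))) ≠ ⇑f) := by
  have leibniz := MonoidAlgebra.map_mul_of_map_single (psiAct (xStar (k := k)))
    (fun g => (Multiplicative.toAdd g).cast) (fun g h => ZMod.cast_add' _ _) psiAct_xStar_single
  refine ⟨?_, fun h => ?_, leibniz, fun f hf => ?_⟩
  · have hxx :
        xStar ⊗ₜ[k] xStar + xStar ⊗ₜ[k] xStar = (0 : DualC (k := k) ⊗[k] DualC (k := k)) := by
      rw [← two_smul k, CharTwo.two_eq_zero, zero_smul]
    rw [deltaDual_xStar, add_tmul, tmul_add]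
    linear_combination (norm := module) -hxx
  · have hg := psiAct_xStar_single (k := k) gC2 1
    rw [h, LinearMap.zero_apply, eq_comm, MonoidAlgebra.single_eq_zero] at hg
    simp [gC2] at hg
  · have h1 := map_one_eq_zero_of_leibniz _ leibniz
    rw [hf, map_one] at h1
    exact one_ne_zero h1

end Char2
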